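/- The vector field in cartesian coordinates X(x,y) = −exp(−1/r²)·(y + x − (x/r)·G(x,y), y − x − (y/r)·G(x,y)) for (x,y) ≠ (0,0), X(0,0) = (0,0), where G(x,y) = exp(−(r/(r+x))²)·(sin²(y/(r+x)) − 2yr²sin²(y/(r+x))/(r+x)³ + (r/(r+x))·sin(2y/(r+x))) for r+x > 0 and G = 0 otherwise, is continuous on ℝ², and the origin is its unique zero. -/

import Mathlib

noncomputable def rad (p : ℝ × ℝ) : ℝ := Real.sqrt (p.1 ^ 2 + p.2 ^ 2)

open Classical in
noncomputable def G (p : ℝ × ℝ) : ℝ :=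
  if 0 < rad p + p.1 then
    Real.exp (-(rad p / (rad p + p.1)) ^ 2) *
      (Real.sin (p.2 / (rad p + p.1)) ^ 2 -
        2 * p.2 * rad p ^ 2 * Real.sin (p.2 / (rad p + p.1)) ^ 2 / (rad p + p.1) ^ 3 +
        (rad p / (rad p + p.1)) * Real.sin (2 * p.2 / (rad p + p.1)))
  else 0

open Classical in
noncomputable def X (p : ℝ × ℝ) : ℝ × ℝ :=
  if p = (0, 0) then (0, 0)
  else
    (-(Real.exp (-(1 / rad p ^ 2))) * (p.2 + p.1 - (p.1 / rad p) * G p),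
     -(Real.exp (-(1 / rad p ^ 2))) * (p.2 - p.1 - (p.2 / rad p) * G p))

/-!
With `r = rad p`, `s = r + x` and `t = r / s`, one has `|G| ≤ e^{-t²} (1 + t + 2t³)`, and
`t e^{-t²} (1 + t + 2t³)` is bounded, so `|G| ≤ 4 s / r`. Hence `G` is bounded by `8` and tends to
`0` at the negative `x`-axis, where `s` vanishes; since moreover `exp (-1/r²) ≤ r²`, `X` is
`O(r²)` at the origin. Away from the origin `y X₁ - x X₂ = -exp (-1/r²) r² ≠ 0`.
-/

open Real Filter Topology

lemma abs_fst_le_rad (p : ℝ × ℝ) : |p.1| ≤ rad p := by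
  rw [rad, ← sqrt_sq_eq_abs]
  exact sqrt_le_sqrt (by nlinarith [sq_nonneg p.2])

lemma abs_snd_le_rad (p : ℝ × ℝ) : |p.2| ≤ rad p := by
  rw [rad, ← sqrt_sq_eq_abs]
  exact sqrt_le_sqrt (by nlinarith [sq_nonneg p.1])

lemma rad_add_fst_nonneg (p : ℝ × ℝ) : 0 ≤ rad p + p.1 := by
  linarith [abs_fst_le_rad p, neg_abs_le p.1]

lemma rad_eq_zero_iff {p : ℝ × ℝ} : rad p = 0 ↔ p = (0, 0) := by
  rw [rad, sqrt_eq_zero (by positivity), Prod.ext_iff]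
  constructor
  · intro h
    constructor <;> nlinarith [sq_nonneg p.1, sq_nonneg p.2]
  · rintro ⟨h₁, h₂⟩
    simp [h₁, h₂]

lemma rad_pos {p : ℝ × ℝ} (hp : p ≠ (0, 0)) : 0 < rad p :=
  (sqrt_nonneg _).lt_of_ne' (rad_eq_zero_iff.not.2 hp)

@[fun_prop]
lemma continuous_rad : Continuous rad := by
  unfold rad
  fun_prop

lemma exp_neg_inv_le {a : ℝ} (ha : 0 < a) : exp (-a⁻¹) ≤ a := by
  calc exp (-a⁻¹) = (exp a⁻¹)⁻¹ := exp_neg _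
    _ ≤ a⁻¹⁻¹ := inv_anti₀ (by positivity) (by linarith [add_one_le_exp a⁻¹])
    _ = a := inv_inv a

lemma mul_exp_neg_sq_mul_le (t : ℝ) : t * exp (-t ^ 2) * (1 + t + 2 * t ^ 3) ≤ 4 := by
  have hexp : 1 + t ^ 2 + (t ^ 2) ^ 2 / 2 ≤ exp (t ^ 2) := quadratic_le_exp_of_nonneg (sq_nonneg t)
  have hinv : exp (-t ^ 2) * exp (t ^ 2) = 1 := by rw [← exp_add]; simp
  have hpoly : t * (1 + t + 2 * t ^ 3) ≤ 4 * (1 + t ^ 2 + (t ^ 2) ^ 2 / 2) := by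
    nlinarith [sq_nonneg (t - 1 / 6)]
  calc t * exp (-t ^ 2) * (1 + t + 2 * t ^ 3)
      = exp (-t ^ 2) * (t * (1 + t + 2 * t ^ 3)) := by ring
    _ ≤ exp (-t ^ 2) * (4 * exp (t ^ 2)) :=
        mul_le_mul_of_nonneg_left (hpoly.trans (by linarith)) (exp_pos _).le
    _ = 4 := by rw [mul_left_comm, hinv, mul_one]

lemma abs_G_le {p : ℝ × ℝ} (hr : 0 < rad p) : |G p| ≤ 4 * (rad p + p.1) / rad p := by
  rcases (rad_add_fst_nonneg p).eq_or_lt with hs | hs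
  · simp [G, ← hs]
  set r := rad p
  set s := r + p.1
  set t := r / s
  have ht : 0 < t := by positivity
  have hcube : |2 * p.2 * r ^ 2 * sin (p.2 / s) ^ 2 / s ^ 3| ≤ 2 * t ^ 3 := by
    have hy : |p.2 / r| ≤ 1 := by
      rw [abs_div, abs_of_pos hr, div_le_one hr]
      exact abs_snd_le_rad p
    rw [show 2 * p.2 * r ^ 2 * sin (p.2 / s) ^ 2 / s ^ 3 = 2 * (p.2 / r) * sin (p.2 / s) ^ 2 * t ^ 3
      by simp only [t]; field_simp]
    rw [abs_mul, abs_mul, abs_mul, abs_two, abs_of_nonneg (sq_nonneg (sin _)),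
      abs_of_pos (pow_pos ht 3)]
    calc _ ≤ 2 * 1 * 1 * t ^ 3 := by gcongr; exact sin_sq_le_one _
      _ = 2 * t ^ 3 := by ring
  have hsin : |sin (p.2 / s) ^ 2 - 2 * p.2 * r ^ 2 * sin (p.2 / s) ^ 2 / s ^ 3 +
      t * sin (2 * p.2 / s)| ≤ 1 + t + 2 * t ^ 3 := by
    have h₁ : |sin (p.2 / s) ^ 2| ≤ 1 := by rw [abs_of_nonneg (sq_nonneg _)]; exact sin_sq_le_one _
    have h₂ : |t * sin (2 * p.2 / s)| ≤ t := by
      rw [abs_mul, abs_of_pos ht]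
      exact mul_le_of_le_one_right ht.le (abs_sin_le_one _)
    calc _ ≤ |sin (p.2 / s) ^ 2| + |2 * p.2 * r ^ 2 * sin (p.2 / s) ^ 2 / s ^ 3| +
          |t * sin (2 * p.2 / s)| :=
          (abs_add_le _ _).trans (add_le_add_left (abs_sub _ _) _)
      _ ≤ 1 + t + 2 * t ^ 3 := by linarith
  calc |G p| = exp (-t ^ 2) * |sin (p.2 / s) ^ 2 - 2 * p.2 * r ^ 2 * sin (p.2 / s) ^ 2 / s ^ 3 +
        t * sin (2 * p.2 / s)| := by
        rw [G, if_pos hs, abs_mul, abs_exp]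
    _ ≤ exp (-t ^ 2) * (1 + t + 2 * t ^ 3) := by gcongr
    _ = t * exp (-t ^ 2) * (1 + t + 2 * t ^ 3) / t := by field_simp
    _ ≤ 4 / t := by gcongr; exact mul_exp_neg_sq_mul_le t
    _ = 4 * s / r := by simp only [t]; field_simp

lemma abs_G_le_eight (p : ℝ × ℝ) : |G p| ≤ 8 := by
  by_cases hp : p = (0, 0)
  · simp [G, hp, rad]
  calc |G p| ≤ 4 * (rad p + p.1) / rad p := abs_G_le (rad_pos hp)
    _ ≤ 8 := by
      rw [div_le_iff₀ (rad_pos hp)]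
      linarith [abs_fst_le_rad p, le_abs_self p.1]

lemma continuousAt_G_of_pos {p : ℝ × ℝ} (hs : 0 < rad p + p.1) : ContinuousAt G p := by
  have hpos : ∀ᶠ q in 𝓝 p, 0 < rad q + q.1 :=
    continuousAt_const.eventually_lt (continuous_rad.add continuous_fst).continuousAt hs
  have hG : G =ᶠ[𝓝 p] fun q => exp (-(rad q / (rad q + q.1)) ^ 2) *
      (sin (q.2 / (rad q + q.1)) ^ 2 -
        2 * q.2 * rad q ^ 2 * sin (q.2 / (rad q + q.1)) ^ 2 / (rad q + q.1) ^ 3 +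
        (rad q / (rad q + q.1)) * sin (2 * q.2 / (rad q + q.1))) := by
    filter_upwards [hpos] with q hq
    rw [G, if_pos hq]
  refine ContinuousAt.congr ?_ hG.symm
  fun_prop (disch := simp [hs.ne'])

lemma continuousAt_G_of_eq_zero {p : ℝ × ℝ} (hr : 0 < rad p) (hs : rad p + p.1 = 0) :
    ContinuousAt G p := by
  have hbound : ContinuousAt (fun q => 4 * (rad q + q.1) / rad q) p := by
    fun_prop (disch := exact hr.ne')
  rw [ContinuousAt, show G p = 0 by simp [G, hs]]
  refine squeeze_zero_norm' ?_ (by simpa [ContinuousAt, hs] using hbound)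
  filter_upwards [continuousAt_const.eventually_lt continuous_rad.continuousAt hr] with q hq
  exact abs_G_le hq

lemma continuousAt_G {p : ℝ × ℝ} (hp : p ≠ (0, 0)) : ContinuousAt G p := by
  rcases (rad_add_fst_nonneg p).eq_or_lt with hs | hs
  · exact continuousAt_G_of_eq_zero (rad_pos hp) hs.symm
  · exact continuousAt_G_of_pos hs

lemma continuousAt_X {p : ℝ × ℝ} (hp : p ≠ (0, 0)) : ContinuousAt X p := by
  have hX : X =ᶠ[𝓝 p] fun q =>
      (-(exp (-(1 / rad q ^ 2))) * (q.2 + q.1 - (q.1 / rad q) * G q),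
       -(exp (-(1 / rad q ^ 2))) * (q.2 - q.1 - (q.2 / rad q) * G q)) := by
    filter_upwards [isOpen_ne.mem_nhds hp] with q hq
    rw [X, if_neg hq]
  have hG := continuousAt_G hp
  refine ContinuousAt.congr ?_ hX.symm
  fun_prop (disch := simp [(rad_pos hp).ne'])

lemma norm_X_le (p : ℝ × ℝ) : ‖X p‖ ≤ rad p ^ 2 * (2 * rad p + 8) := by
  by_cases hp : p = (0, 0)
  · simp [X, hp, rad]
  have hr := rad_pos hp
  have hexp : exp (-(1 / rad p ^ 2)) ≤ rad p ^ 2 := by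
    simpa only [one_div] using exp_neg_inv_le (pow_pos hr 2)
  have hcoord : ∀ a b c : ℝ, |a| ≤ rad p → |b| ≤ rad p → |c| ≤ rad p →
      exp (-(1 / rad p ^ 2)) * |a + b - c / rad p * G p| ≤ rad p ^ 2 * (2 * rad p + 8) := by
    intro a b c ha hb hc
    have hcG : |c / rad p * G p| ≤ 8 := by
      rw [abs_mul, abs_div, abs_of_pos hr]
      exact (mul_le_of_le_one_left (abs_nonneg _) ((div_le_one hr).2 hc)).trans (abs_G_le_eight p)
    have hsum : |a + b - c / rad p * G p| ≤ 2 * rad p + 8 := by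
      linarith [abs_sub (a + b) (c / rad p * G p), abs_add_le a b]
    exact mul_le_mul hexp hsum (abs_nonneg _) (sq_nonneg _)
  have hx := abs_fst_le_rad p
  have hy := abs_snd_le_rad p
  rw [X, if_neg hp, Prod.norm_def, norm_mul, norm_mul, norm_neg, norm_eq_abs, norm_eq_abs,
    norm_eq_abs, abs_exp, sub_eq_add_neg p.2 p.1]
  exact max_le (hcoord _ _ _ hy hx hx) (hcoord _ _ _ hy (by rwa [abs_neg]) hy)

lemma continuousAt_X_zero : ContinuousAt X (0, 0) := by
  have hbound : Tendsto (fun p => rad p ^ 2 * (2 * rad p + 8)) (𝓝 (0, 0)) (𝓝 0) := by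
    simpa [rad] using (show Continuous fun p => rad p ^ 2 * (2 * rad p + 8) by fun_prop).tendsto
      ((0, 0) : ℝ × ℝ)
  rw [ContinuousAt, show X (0, 0) = 0 by simp [X]]
  exact squeeze_zero_norm norm_X_le hbound

lemma X_ne_zero {p : ℝ × ℝ} (hp : p ≠ (0, 0)) : X p ≠ (0, 0) := by
  intro hX
  rw [X, if_neg hp, Prod.mk.injEq] at hX
  have hE : -exp (-(1 / rad p ^ 2)) ≠ 0 := neg_ne_zero.2 (exp_pos _).ne'
  have h₁ := (mul_eq_zero.1 hX.1).resolve_left hE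
  have h₂ := (mul_eq_zero.1 hX.2).resolve_left hE
  have hsq : rad p ^ 2 = 0 := by
    rw [rad, sq_sqrt (by positivity)]
    linear_combination p.2 * h₁ - p.1 * h₂
  exact hp (rad_eq_zero_iff.1 (pow_eq_zero_iff two_ne_zero |>.1 hsq))

theorem stmt_14 : Continuous X ∧ ∀ p : ℝ × ℝ, X p = (0, 0) ↔ p = (0, 0) := by
  refine ⟨continuous_iff_continuousAt.2 fun p => ?_, fun p => ⟨fun hX => ?_, fun hp => ?_⟩⟩
  · by_cases hp : p = (0, 0)
    · exact hp ▸ continuousAt_X_zero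
    · exact continuousAt_X hp
  · exact not_imp_not.1 X_ne_zero hX
  · simp [X, hp]
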